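/- Let π be a set of primes with complement π′, and let A be a modular subgroup of a finite group G for which there is a chain of subgroups A = A_0 ≤ A_1 ≤ ⋯ ≤ A_n = G such that for each i = 1,…,n either A_{i-1} is normal in A_i or A_i/(A_{i-1})_{A_i} is a π_0-group for some π_0 ∈ {π, π′}. If G possesses a Hall π_0-subgroup for π_0 ∈ {π, π′}, then A permutes with each Hall π_0-subgroup H of G, i.e., AH = HA. -/

import Mathlib

open Subgroup Pointwise

/-- A finite group (or any type) is a `π`-group if every prime dividing its
cardinality belongs to `π`. -/
def IsPiGroup (π : Set ℕ) (X : Type*) : Prop :=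
  ∀ p : ℕ, p.Prime → p ∣ Nat.card X → p ∈ π

/-- The complementary set of primes `π'`. -/
def primeCompl (π : Set ℕ) : Set ℕ := {p : ℕ | p.Prime ∧ p ∉ π}

/-- `σ : I → Set ℕ` is a partition of the set of all primes: the `σ i` consist of
primes, and every prime belongs to exactly one `σ i` (so they are pairwise
disjoint and their union is the set of all primes). -/
def IsPrimePartition {I : Type*} (σ : I → Set ℕ) : Prop :=
  (∀ i, ∀ p ∈ σ i, p.Prime) ∧ ∀ p : ℕ, p.Prime → ∃! i, p ∈ σ i

/-- A group is `σ`-primary if it is a `σ i`-group for some `i`. -/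
def IsSigmaPrimary {I : Type*} (σ : I → Set ℕ) (X : Type*) : Prop :=
  ∃ i, IsPiGroup (σ i) X

/-- `σ (n)`: the set of indices `i` such that `σ i` contains a prime dividing `n`. -/
def sigmaOf {I : Type*} (σ : I → Set ℕ) (n : ℕ) : Set I :=
  {i | ∃ p : ℕ, p.Prime ∧ p ∈ σ i ∧ p ∣ n}

/-- `A` is a modular subgroup of `G` (a modular element of the subgroup lattice). -/
def IsModularSubgroup {G : Type*} [Group G] (A : Subgroup G) : Prop :=
  (∀ X Z : Subgroup G, X ≤ Z → X ⊔ (A ⊓ Z) = (X ⊔ A) ⊓ Z) ∧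
  (∀ Y Z : Subgroup G, A ≤ Z → A ⊔ (Y ⊓ Z) = (A ⊔ Y) ⊓ Z)

/-- `A` is `σ`-subnormal in `G`: there is a chain `A = A₀ ≤ A₁ ≤ ⋯ ≤ Aₙ = G`
such that each `A i` is normal in `A (i+1)` or `A (i+1) / (A i)_{A (i+1)}` is
`σ`-primary. -/
def IsSigmaSubnormal {I : Type*} (σ : I → Set ℕ) {G : Type*} [Group G]
    (A : Subgroup G) : Prop :=
  ∃ (n : ℕ) (c : Fin (n + 1) → Subgroup G),
    c 0 = A ∧ c (Fin.last n) = ⊤ ∧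
    ∀ i : Fin n,
      c i.castSucc ≤ c i.succ ∧
        (((c i.castSucc).subgroupOf (c i.succ)).Normal ∨
          IsSigmaPrimary σ
            (c i.succ ⧸ ((c i.castSucc).subgroupOf (c i.succ)).normalCore))

/-- `A` is `σ`-quasinormal in `G` if it is modular and `σ`-subnormal in `G`. -/
def IsSigmaQuasinormal {I : Type*} (σ : I → Set ℕ) {G : Type*} [Group G]
    (A : Subgroup G) : Prop :=
  IsModularSubgroup A ∧ IsSigmaSubnormal σ A

/-- `H` is a Hall `π`-subgroup of `G`: `|H|` is a `π`-number and `[G : H]` has no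
prime divisors in `π`. -/
def IsHallPiSubgroup (π : Set ℕ) {G : Type*} [Group G] (H : Subgroup G) : Prop :=
  IsPiGroup π H ∧ ∀ p : ℕ, p.Prime → p ∣ H.index → p ∉ π

/-- Two subgroups permute if `AB = BA` as sets. -/
def Permutes {G : Type*} [Group G] (A B : Subgroup G) : Prop :=
  (A : Set G) * (B : Set G) = (B : Set G) * (A : Set G)

/-- A group is `σ`-nilpotent if it is a direct product of `σ`-primary groups. -/
def IsSigmaNilpotent {I : Type*} (σ : I → Set ℕ) (X : Type*) [Group X] : Prop :=
  ∃ (n : ℕ) (H : Fin n → GrpCat.{0}),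
    (∀ i, Finite (H i)) ∧ (∀ i, IsSigmaPrimary σ (H i)) ∧
      Nonempty (X ≃* ((i : Fin n) → H i))

/-- `C_G(H/K)`: the set of all `g ∈ G` such that `⁅h, g⁆ ∈ K` for all `h ∈ H`,
realized as the preimage in `G` of the centralizer of the image of `H` in `G ⧸ K`. -/
def quotCentralizer {G : Type*} [Group G] (H K : Subgroup G) (hK : K.Normal) :
    Subgroup G :=
  haveI := hK
  Subgroup.comap (QuotientGroup.mk' K)
    (Subgroup.centralizer ((H.map (QuotientGroup.mk' K) : Subgroup (G ⧸ K)) : Set (G ⧸ K)))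

/-- `H/K` is a chief factor of `G`: `K < H` are normal subgroups of `G` with no
normal subgroup of `G` strictly between them. -/
def IsChiefFactor {G : Type*} [Group G] (H K : Subgroup G) : Prop :=
  K.Normal ∧ H.Normal ∧ K < H ∧
    ∀ L : Subgroup G, L.Normal → K ≤ L → L ≤ H → L = K ∨ L = H

/-- A factor `H/K` (with `K` normal in `G`) is `σ`-central in `G`:
there is an `i` such that both `H/K` and `G/C_G(H/K)` are `σ i`-groups
(equivalently, `(H/K) ⋊ (G/C_G(H/K))` is `σ`-primary). -/
def IsSigmaCentral {I : Type*} (σ : I → Set ℕ) {G : Type*} [Group G]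
    (H K : Subgroup G) (hK : K.Normal) : Prop :=
  ∃ i, IsPiGroup (σ i) (H ⧸ K.subgroupOf H) ∧
    IsPiGroup (σ i) (G ⧸ quotCentralizer H K hK)

/-- A normal subgroup `E` of `G` is `σ`-hypercentral in `G` if either `E = 1` or
every chief factor of `G` below `E` is `σ`-central in `G`. -/
def IsSigmaHypercentral {I : Type*} (σ : I → Set ℕ) {G : Type*} [Group G]
    (E : Subgroup G) : Prop :=
  E.Normal ∧ (E = ⊥ ∨
    ∀ H K : Subgroup G, (hc : IsChiefFactor H K) → H ≤ E →
      IsSigmaCentral σ H K hc.1)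

/-- The `σ`-hypercentre `Z_σ(G)`: the product of all `σ`-hypercentral normal
subgroups of `G`. -/
def sigmaHypercentre {I : Type*} (σ : I → Set ℕ) (G : Type*) [Group G] : Subgroup G :=
  sSup {E : Subgroup G | IsSigmaHypercentral σ E}

/-- `O_π(X)`: the largest normal `π`-subgroup of `X` (the product of all normal
`π`-subgroups). -/
def piCore (π : Set ℕ) (X : Type*) [Group X] : Subgroup X :=
  sSup {N : Subgroup X | N.Normal ∧ IsPiGroup π N}

/-- `O^π(X)`: the smallest normal subgroup of `X` whose quotient is a `π`-group. -/
def piResidual (π : Set ℕ) (X : Type*) [Group X] : Subgroup X :=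
  sInf {N : Subgroup X | N.Normal ∧ IsPiGroup π (X ⧸ N)}

/-- A family of subgroups forms an internal direct product decomposition of `X`. -/
def IsInternalDirectProduct {X : Type*} [Group X] {ι : Type*}
    (N : ι → Subgroup X) : Prop :=
  (∀ i, (N i).Normal) ∧ iSupIndep N ∧ iSup N = ⊤

/-- `X` is `π`-decomposable: `X = O_π(X) × O_{π'}(X)` (internal direct product). -/
def IsPiDecomposable (π : Set ℕ) (X : Type*) [Group X] : Prop :=
  (piCore π X).Normal ∧ (piCore (primeCompl π) X).Normal ∧
    Disjoint (piCore π X) (piCore (primeCompl π) X) ∧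
      piCore π X ⊔ piCore (primeCompl π) X = ⊤

/-- `X` is `π`-special for a finite set of primes `π = {p₁, …, pₙ}`:
`X = O_{p₁}(X) × ⋯ × O_{pₙ}(X) × O_{π'}(X)` (internal direct product). -/
def IsPiSpecial (π : Finset ℕ) (X : Type*) [Group X] : Prop :=
  IsInternalDirectProduct (fun o : Option {p : ℕ // p ∈ π} =>
    o.elim (piCore (primeCompl ↑π) X) (fun p => piCore {(p : ℕ)} X))

/-- The chain condition of Corollary 1.3: each factor is normal or the
corresponding quotient is a `π₀`-group for some `π₀ ∈ {π, π'}`. -/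
def IsPiPiPrimeSubnormal (π : Set ℕ) {G : Type*} [Group G] (A : Subgroup G) : Prop :=
  ∃ (n : ℕ) (c : Fin (n + 1) → Subgroup G),
    c 0 = A ∧ c (Fin.last n) = ⊤ ∧
    ∀ i : Fin n,
      c i.castSucc ≤ c i.succ ∧
        (((c i.castSucc).subgroupOf (c i.succ)).Normal ∨
          ∃ π₀ ∈ ({π, primeCompl π} : Set (Set ℕ)),
            IsPiGroup π₀
              (c i.succ ⧸ ((c i.castSucc).subgroupOf (c i.succ)).normalCore))

/-- The chain condition of Corollary 1.4: each factor is normal or the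
corresponding quotient is a `π'`-group. -/
def IsPiPrimeSubnormal (π : Set ℕ) {G : Type*} [Group G] (A : Subgroup G) : Prop :=
  ∃ (n : ℕ) (c : Fin (n + 1) → Subgroup G),
    c 0 = A ∧ c (Fin.last n) = ⊤ ∧
    ∀ i : Fin n,
      c i.castSucc ≤ c i.succ ∧
        (((c i.castSucc).subgroupOf (c i.succ)).Normal ∨
          IsPiGroup (primeCompl π)
            (c i.succ ⧸ ((c i.castSucc).subgroupOf (c i.succ)).normalCore))

/-- The centralizer of (the carrier of) a normal subgroup is normal. -/
theorem centralizer_normal_of_normal {G : Type*} [Group G] {N : Subgroup G}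
    (hN : N.Normal) : (Subgroup.centralizer (N : Set G)).Normal := by
  constructor
  intro g hg c
  rw [Subgroup.mem_centralizer_iff] at hg ⊢
  intro s hs
  have hs' : c⁻¹ * s * c ∈ (N : Set G) := hN.conj_mem' s hs c
  have h := hg _ hs'
  have : c * ((c⁻¹ * s * c) * g) * c⁻¹ = c * (g * (c⁻¹ * s * c)) * c⁻¹ := by rw [h]
  calc s * (c * g * c⁻¹) = c * ((c⁻¹ * s * c) * g) * c⁻¹ := by group
    _ = c * (g * (c⁻¹ * s * c)) * c⁻¹ := this
    _ = (c * g * c⁻¹) * s := by group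

/-- `C_G(H/K)` is normal in `G` whenever `H` and `K` are. -/
theorem quotCentralizer_normal {G : Type*} [Group G] {H K : Subgroup G}
    (hK : K.Normal) (hH : H.Normal) : (quotCentralizer H K hK).Normal := by
  haveI := hK
  exact (centralizer_normal_of_normal
    (hH.map (QuotientGroup.mk' K) (QuotientGroup.mk'_surjective K))).comap _

/-!
Induction on `|G|`. If `A ≠ G`, let `M` be the last proper member of the chain. It suffices to
find a proper subgroup `E ≥ A` that permutes with `H`: then `H ∩ E` is a Hall `π₀`-subgroup of
`E`, so `A` permutes with `H ∩ E` by induction, and modularity, `A ⊔ (H ∩ E) = (A ⊔ H) ∩ E`,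
lifts this to `AH = HA`. If `M ⊴ G`, take `E = M`. Otherwise `G / M_G` is a `π₁`-group for
some `π₁ ∈ {π, π'}`: if `π₁ = π₀` then `M_G H = G` and `E = A M_G` works, while if `π₁ ≠ π₀`
then `H ≤ M_G ≤ M` and `E = M` works.
-/

section

variable {G : Type*} [Group G]

theorem IsPiGroup.of_card_dvd {π : Set ℕ} {X Y : Type*} (hY : IsPiGroup π Y)
    (h : Nat.card X ∣ Nat.card Y) : IsPiGroup π X :=
  fun p hp hpX => hY p hp (hpX.trans h)

theorem eq_one_of_dvd_of_dvd {s : Set ℕ} {a b n : ℕ} (ha : ∀ p : ℕ, p.Prime → p ∣ a → p ∈ s)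
    (hb : ∀ p : ℕ, p.Prime → p ∣ b → p ∉ s) (hna : n ∣ a) (hnb : n ∣ b) : n = 1 := by
  by_contra hn
  have hp := Nat.minFac_prime hn
  exact hb _ hp ((Nat.minFac_dvd n).trans hnb) (ha _ hp ((Nat.minFac_dvd n).trans hna))

theorem disjoint_primeCompl (π : Set ℕ) : Disjoint π (primeCompl π) :=
  Set.disjoint_left.mpr fun _ hp hp' => hp'.2 hp

theorem disjoint_of_mem_pair_primeCompl {π π₀ π₁ : Set ℕ}
    (h₀ : π₀ ∈ ({π, primeCompl π} : Set (Set ℕ))) (h₁ : π₁ ∈ ({π, primeCompl π} : Set (Set ℕ)))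
    (hne : π₀ ≠ π₁) : Disjoint π₀ π₁ := by
  rcases h₀ with rfl | rfl <;> rcases h₁ with rfl | rfl
  · exact absurd rfl hne
  · exact disjoint_primeCompl _
  · exact (disjoint_primeCompl _).symm
  · exact absurd rfl hne

theorem permutes_of_le_normalizer {E H : Subgroup G} (h : H ≤ normalizer (E : Set G)) :
    Permutes E H :=
  (set_mul_normalizer_comm (H : Set G) E h).symm

theorem permutes_of_le {E H : Subgroup G} (h : H ≤ E) : Permutes E H :=
  permutes_of_le_normalizer (h.trans le_normalizer)

theorem permutes_of_mul_eq_univ {E H : Subgroup G} (h : (E : Set G) * (H : Set G) = Set.univ) :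
    Permutes E H := by
  unfold Permutes
  rw [h, ← Set.inv_univ, ← h, mul_inv_rev, inv_coe_set, inv_coe_set]

theorem Permutes.map {G' : Type*} [Group G'] {A B : Subgroup G} (h : Permutes A B)
    (f : G →* G') : Permutes (A.map f) (B.map f) := by
  unfold Permutes at h ⊢
  rw [coe_map, coe_map, ← Set.image_mul, h, Set.image_mul]

theorem mul_subset_coe_sup (A B : Subgroup G) : (A : Set G) * B ⊆ (A ⊔ B : Subgroup G) := by
  rintro _ ⟨a, ha, b, hb, rfl⟩
  exact mul_mem_sup ha hb

theorem Permutes.coe_sup {A B : Subgroup G} (h : Permutes A B) :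
    ((A ⊔ B : Subgroup G) : Set G) = A * B := by
  have hmul : (A : Set G) * B * (A * B) = A * B := by
    rw [mul_assoc, ← mul_assoc (B : Set G), ← h, mul_assoc, ← mul_assoc, coe_mul_coe, coe_mul_coe]
  have hinv : ((A : Set G) * B)⁻¹ = A * B := by
    rw [mul_inv_rev, inv_coe_set, inv_coe_set, h]
  let P : Subgroup G :=
    { carrier := A * B
      one_mem' := ⟨1, A.one_mem, 1, B.one_mem, one_mul 1⟩
      mul_mem' := fun hx hy => hmul ▸ Set.mul_mem_mul hx hy
      inv_mem' := fun hx => hinv ▸ Set.inv_mem_inv.mpr hx }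
  refine subset_antisymm (sup_le (a := A) (b := B) (c := P) ?_ ?_) (mul_subset_coe_sup A B)
  · exact fun a ha => ⟨a, ha, 1, B.one_mem, mul_one a⟩
  · exact fun b hb => ⟨1, A.one_mem, b, hb, one_mul b⟩

theorem permutes_of_coe_sup_subset {A B : Subgroup G}
    (h : ((A ⊔ B : Subgroup G) : Set G) ⊆ A * B) : Permutes A B := by
  have hsup : (A : Set G) * B = (A ⊔ B : Subgroup G) := subset_antisymm (mul_subset_coe_sup A B) h
  calc (A : Set G) * B = ((A ⊔ B : Subgroup G) : Set G)⁻¹ := by rw [inv_coe_set, hsup]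
    _ = B * A := by rw [← hsup, mul_inv_rev, inv_coe_set, inv_coe_set]

theorem relIndex_eq_index_of_mul_eq_univ {E H : Subgroup G}
    (h : (E : Set G) * (H : Set G) = Set.univ) : H.relIndex E = H.index := by
  have hsmul (e : E) (g : G) : e • (g : G ⧸ H) = ((e * g : G) : G ⧸ H) := rfl
  have hstab : MulAction.stabilizer E ((1 : G) : G ⧸ H) = H.subgroupOf E := by
    ext e
    rw [MulAction.mem_stabilizer_iff, hsmul, eq_comm, QuotientGroup.eq, mem_subgroupOf]
    simp
  have horbit : MulAction.orbit E ((1 : G) : G ⧸ H) = Set.univ := by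
    refine Set.eq_univ_of_forall fun q => QuotientGroup.induction_on q fun g => ?_
    obtain ⟨e, he, k, hk, rfl⟩ : g ∈ (E : Set G) * H := h ▸ Set.mem_univ g
    refine ⟨⟨e, he⟩, ?_⟩
    change _ • _ = ((e * k : G) : G ⧸ H)
    rw [hsmul, QuotientGroup.eq]
    simpa using hk
  rw [relIndex, ← hstab, MulAction.index_stabilizer, horbit, Set.ncard_univ, index]

theorem Permutes.relIndex_dvd_index {E H : Subgroup G} (h : Permutes E H) :
    H.relIndex E ∣ H.index := by
  set W := E ⊔ H
  have hmul : ((E.subgroupOf W : Subgroup W) : Set W) * ((H.subgroupOf W : Subgroup W) : Set W)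
      = Set.univ := by
    refine Set.eq_univ_of_forall fun x => ?_
    obtain ⟨e, he, k, hk, hx⟩ : (x : G) ∈ (E : Set G) * H := h.coe_sup ▸ x.2
    exact ⟨⟨e, le_sup_left (b := H) he⟩, he, ⟨k, le_sup_right (a := E) hk⟩, hk, Subtype.ext hx⟩
  rw [← relIndex_subgroupOf (le_sup_left : E ≤ W), relIndex_eq_index_of_mul_eq_univ hmul]
  exact relIndex_dvd_index_of_le le_sup_right

namespace IsHallPiSubgroup

variable {π₀ : Set ℕ} {H : Subgroup G}

theorem subgroupOf (hH : IsHallPiSubgroup π₀ H) {E : Subgroup G} (hEH : Permutes E H) :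
    IsHallPiSubgroup π₀ (H.subgroupOf E) :=
  ⟨hH.1.of_card_dvd (card_comap_dvd_of_injective H E.subtype E.subtype_injective),
    fun p hp hpE => hH.2 p hp (hpE.trans hEH.relIndex_dvd_index)⟩

theorem sup_eq_top (hH : IsHallPiSubgroup π₀ H) {K : Subgroup G} (hK : IsPiGroup π₀ (G ⧸ K)) :
    K ⊔ H = ⊤ :=
  index_eq_one.mp <|
    eq_one_of_dvd_of_dvd hK hH.2 (index_dvd_of_le le_sup_left) (index_dvd_of_le le_sup_right)

theorem le_of_isPiGroup_quotient (hH : IsHallPiSubgroup π₀ H) {π₁ : Set ℕ} {K : Subgroup G}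
    [K.Normal] (hK : IsPiGroup π₁ (G ⧸ K)) (hdisj : Disjoint π₀ π₁) : H ≤ K :=
  relIndex_eq_one.mp <| eq_one_of_dvd_of_dvd hH.1
    (fun p hp hpK hp₀ => Set.disjoint_left.mp hdisj hp₀ (hK p hp hpK))
    (relIndex_dvd_card K H) (relIndex_dvd_index_of_normal K H)

end IsHallPiSubgroup

namespace IsModularSubgroup

variable {A : Subgroup G}

theorem subgroupOf (hmod : IsModularSubgroup A) {E : Subgroup G} (hAE : A ≤ E) :
    IsModularSubgroup (A.subgroupOf E) := by
  have inj : Function.Injective (map E.subtype) := map_injective E.subtype_injective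
  have hmapA : (A.subgroupOf E).map E.subtype = A := by
    rw [subgroupOf_map_subtype, inf_eq_left.mpr hAE]
  have hmap_inf (X Y : Subgroup E) : (X ⊓ Y).map E.subtype = X.map E.subtype ⊓ Y.map E.subtype :=
    map_inf X Y _ E.subtype_injective
  constructor
  · intro X Z hXZ
    apply inj
    simp only [Subgroup.map_sup, hmap_inf, hmapA]
    exact hmod.1 _ _ (map_mono hXZ)
  · intro Y Z hAZ
    apply inj
    simp only [Subgroup.map_sup, hmap_inf, hmapA]
    exact hmod.2 _ _ (hmapA ▸ map_mono hAZ)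

theorem permutes_of_permutes_inf (hmod : IsModularSubgroup A) {E H : Subgroup G} (hAE : A ≤ E)
    (hEH : Permutes E H) (hA : Permutes A (H ⊓ E)) : Permutes A H := by
  refine permutes_of_coe_sup_subset fun x hx => ?_
  obtain ⟨e, he, k, hk, rfl⟩ : x ∈ (E : Set G) * H :=
    hEH.coe_sup ▸ sup_le_sup_right hAE H hx
  have heAH : e ∈ A ⊔ H := by
    simpa using mul_mem hx (inv_mem (mem_sup_right hk) : k⁻¹ ∈ A ⊔ H)
  obtain ⟨a, ha, k', hk', rfl⟩ : e ∈ (A : Set G) * ↑(H ⊓ E) := by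
    rw [← hA.coe_sup, hmod.2 H E hAE]
    exact ⟨heAH, he⟩
  exact ⟨a, ha, k' * k, mul_mem hk'.1 hk, (mul_assoc a k' k).symm⟩

end IsModularSubgroup

/-- The condition on a link `A_{i-1} ≤ A_i` of the chain in `IsPiPiPrimeSubnormal`, stated for
`K = A_{i-1} ∩ A_i` as a subgroup of `X = A_i`. -/
def IsPiPiPrimeStep (π : Set ℕ) {X : Type*} [Group X] (K : Subgroup X) : Prop :=
  K.Normal ∨ ∃ π₀ ∈ ({π, primeCompl π} : Set (Set ℕ)), IsPiGroup π₀ (X ⧸ K.normalCore)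

theorem index_normalCore_comap_dvd {X Y : Type*} [Group X] [Group Y] (f : X →* Y)
    (D : Subgroup Y) : (D.comap f).normalCore.index ∣ D.normalCore.index := by
  refine (index_dvd_of_le (normal_le_normalCore.mpr (comap_mono D.normalCore_le))).trans ?_
  rw [index_comap]
  exact relIndex_dvd_index_of_normal _ _

theorem IsPiPiPrimeStep.comap {π : Set ℕ} {X Y : Type*} [Group X] [Group Y] {D : Subgroup Y}
    (h : IsPiPiPrimeStep π D) (f : X →* Y) : IsPiPiPrimeStep π (D.comap f) :=
  h.imp (fun hD => hD.comap f) fun ⟨π₀, hπ₀, hq⟩ =>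
    ⟨π₀, hπ₀, hq.of_card_dvd (index_normalCore_comap_dvd f D)⟩

namespace IsPiPiPrimeSubnormal

variable {π : Set ℕ} {A : Subgroup G}

theorem subgroupOf (h : IsPiPiPrimeSubnormal π A) (E : Subgroup G) :
    IsPiPiPrimeSubnormal π (A.subgroupOf E) := by
  obtain ⟨n, c, h0, hlast, hstep⟩ := h
  refine ⟨n, fun i => (c i).subgroupOf E, congrArg (Subgroup.subgroupOf · E) h0,
    (congrArg (Subgroup.subgroupOf · E) hlast).trans (top_subgroupOf E),
    fun i => ⟨comap_mono (hstep i).1, ?_⟩⟩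
  exact IsPiPiPrimeStep.comap (hstep i).2 (E.subtype.subgroupComap (c i.succ))

theorem eq_top_or_exists_step (h : IsPiPiPrimeSubnormal π A) :
    A = ⊤ ∨ ∃ M : Subgroup G, A ≤ M ∧ M ≠ ⊤ ∧ IsPiPiPrimeStep π M := by
  obtain ⟨n, c, h0, hlast, hstep⟩ := h
  induction n generalizing A with
  | zero => exact Or.inl (h0 ▸ hlast)
  | succ m ih =>
    by_cases hM : c (Fin.last m).castSucc = ⊤
    · exact ih (fun i => c i.castSucc) h0 hM fun i => hstep i.castSucc
    · have hmono : Monotone c := Fin.monotone_iff_le_succ.mpr fun i => (hstep i).1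
      have htop : IsPiPiPrimeStep π ((c (Fin.last m).castSucc).subgroupOf ⊤) := by
        have := (hstep (Fin.last m)).2
        rw [Fin.succ_last, hlast] at this
        exact this
      exact Or.inr ⟨_, h0 ▸ hmono (Fin.zero_le _), hM,
        htop.comap (topEquiv (G := G)).symm.toMonoidHom⟩

end IsPiPiPrimeSubnormal

theorem IsHallPiSubgroup.exists_permutes_of_isPiPiPrimeStep {π π₀ : Set ℕ}
    (hπ₀ : π₀ ∈ ({π, primeCompl π} : Set (Set ℕ))) {H : Subgroup G}
    (hH : IsHallPiSubgroup π₀ H) {A M : Subgroup G} (hAM : A ≤ M) (hM : M ≠ ⊤)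
    (hstep : IsPiPiPrimeStep π M) : ∃ E : Subgroup G, A ≤ E ∧ E ≠ ⊤ ∧ Permutes E H := by
  rcases hstep with hMn | ⟨π₁, hπ₁, hq⟩
  · exact ⟨M, hAM, hM, permutes_of_le_normalizer (normalizer_eq_top_iff.mpr hMn ▸ le_top)⟩
  by_cases hπ : π₁ = π₀
  · subst hπ
    have hKH : (M.normalCore : Set G) * (H : Set G) = Set.univ := by
      rw [← normal_mul, hH.sup_eq_top hq, coe_top]
    refine ⟨A ⊔ M.normalCore, le_sup_left,
      ne_top_of_le_ne_top hM (sup_le hAM M.normalCore_le), permutes_of_mul_eq_univ ?_⟩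
    exact Set.eq_univ_of_univ_subset <| hKH ▸ Set.mul_subset_mul_right (le_sup_right : _ ≤ A ⊔ _)
  · have hdisj := disjoint_of_mem_pair_primeCompl hπ₀ hπ₁ (Ne.symm hπ)
    exact ⟨M, hAM, hM, permutes_of_le ((hH.le_of_isPiGroup_quotient hq hdisj).trans
      M.normalCore_le)⟩

end

theorem IsModularSubgroup.permutes_hall {π π₀ : Set ℕ}
    (hπ₀ : π₀ ∈ ({π, primeCompl π} : Set (Set ℕ))) {G : Type*} [Group G] [Finite G]
    {A : Subgroup G} (hmod : IsModularSubgroup A) (hchain : IsPiPiPrimeSubnormal π A)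
    {H : Subgroup G} (hH : IsHallPiSubgroup π₀ H) : Permutes A H := by
  induction hn : Nat.card G using Nat.strong_induction_on generalizing G with
  | _ n ih =>
  rcases hchain.eq_top_or_exists_step with rfl | ⟨M, hAM, hM, hstep⟩
  · exact permutes_of_le le_top
  obtain ⟨E, hAE, hE, hEH⟩ := hH.exists_permutes_of_isPiPiPrimeStep hπ₀ hAM hM hstep
  have hlt : Nat.card E < n :=
    hn ▸ (card_le_card_group E).lt_of_ne fun h => hE (eq_top_of_card_eq E h)
  have hperm := ih _ hlt (hmod.subgroupOf hAE) (hchain.subgroupOf E) (hH.subgroupOf hEH) rfl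
  refine hmod.permutes_of_permutes_inf hAE hEH ?_
  simpa [subgroupOf_map_subtype, inf_of_le_left hAE] using hperm.map E.subtype

theorem modular_piPiPrime_permutes_hall_general (π : Set ℕ)
    {G : Type*} [Group G] [Finite G] (A : Subgroup G)
    (hmod : IsModularSubgroup A) (hchain : IsPiPiPrimeSubnormal π A) :
    ∀ π₀ ∈ ({π, primeCompl π} : Set (Set ℕ)),
      (∃ H : Subgroup G, IsHallPiSubgroup π₀ H) →
        ∀ H : Subgroup G, IsHallPiSubgroup π₀ H → Permutes A H :=
  fun _ hπ₀ _ _ hH => hmod.permutes_hall hπ₀ hchain hH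

/-- Corollary 1.3(i): A modular subgroup with a chain whose
non-normal factors are `π₀`-groups (`π₀ ∈ {π, π'}`) permutes with each Hall
`π₀`-subgroup of `G`, whenever `G` possesses one. -/
theorem modular_piPiPrime_permutes_hall (π : Set ℕ) (hπ : ∀ p ∈ π, Nat.Prime p)
    {G : Type*} [Group G] [Finite G] (A : Subgroup G)
    (hmod : IsModularSubgroup A) (hchain : IsPiPiPrimeSubnormal π A) :
    ∀ π₀ ∈ ({π, primeCompl π} : Set (Set ℕ)),
      (∃ H : Subgroup G, IsHallPiSubgroup π₀ H) →
        ∀ H : Subgroup G, IsHallPiSubgroup π₀ H → Permutes A H :=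
  modular_piPiPrime_permutes_hall_general π A hmod hchain
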